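/- In Sette's three-valued semantics for P1, a formula X is valid if and only if X is valid in classical two-valued logic under the translation that identifies the designated values {1,*} with 'true' and 0 with 'false', provided X contains no negation applied directly to an atomic subformula. More precisely: if every occurrence of ¬ and ∼ in X has non-atomic scope, then X is P1-valid iff X (reading ¬ and ∼ both as classical negation) is a classical tautology. -/
import Mathlib


inductive TV | one | star | zero
deriving DecidableEq

def tvNeg : TV → TV
  | .one => .zero | .star => .one | .zero => .one

def tvSNeg : TV → TV
  | .one => .zero | .star => .zero | .zero => .one

def tvInc : TV → TV
  | .one => .one | .star => .zero | .zero => .one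

def tvAnd (x y : TV) : TV := if x ≠ TV.zero ∧ y ≠ TV.zero then .one else .zero
def tvOr (x y : TV) : TV := if x = TV.zero ∧ y = TV.zero then .zero else .one
def tvImp (x y : TV) : TV := if x ≠ TV.zero ∧ y = TV.zero then .zero else .one

inductive Fm
  | atom (n : ℕ)
  | neg (X : Fm)
  | sneg (X : Fm)
  | inc (n : ℕ)
  | conj (X Y : Fm)
  | disj (X Y : Fm)
  | imp (X Y : Fm)

def eval (v : ℕ → TV) : Fm → TV
  | .atom n => v n
  | .neg X => tvNeg (eval v X)
  | .sneg X => tvSNeg (eval v X)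
  | .inc n => tvInc (v n)
  | .conj X Y => tvAnd (eval v X) (eval v Y)
  | .disj X Y => tvOr (eval v X) (eval v Y)
  | .imp X Y => tvImp (eval v X) (eval v Y)

def valid (X : Fm) : Prop := ∀ v : ℕ → TV, eval v X ≠ TV.zero

def noAtomicNeg : Fm → Prop
  | .atom _ => True
  | .inc _ => True
  | .neg X => (¬ ∃ n, X = Fm.atom n) ∧ noAtomicNeg X
  | .sneg X => (¬ ∃ n, X = Fm.atom n) ∧ noAtomicNeg X
  | .conj X Y => noAtomicNeg X ∧ noAtomicNeg Y
  | .disj X Y => noAtomicNeg X ∧ noAtomicNeg Y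
  | .imp X Y => noAtomicNeg X ∧ noAtomicNeg Y

def noInc : Fm → Prop
  | .atom _ => True
  | .inc _ => False
  | .neg X => noInc X
  | .sneg X => noInc X
  | .conj X Y => noInc X ∧ noInc Y
  | .disj X Y => noInc X ∧ noInc Y
  | .imp X Y => noInc X ∧ noInc Y

def ceval (w : ℕ → Bool) : Fm → Bool
  | .atom n => w n
  | .neg X => ! ceval w X
  | .sneg X => ! ceval w X
  | .inc _ => true
  | .conj X Y => ceval w X && ceval w Y
  | .disj X Y => ceval w X || ceval w Y
  | .imp X Y => ! ceval w X || ceval w Y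

def tb : TV → Bool
  | .zero => false | _ => true

def ofBool : Bool → TV
  | true => .one | false => .zero

lemma nonatom_nostar (v : ℕ → TV) (X : Fm) (h : ¬ ∃ n, X = Fm.atom n) :
    eval v X ≠ TV.star := by
  cases X with
  | atom n => exact absurd ⟨n, rfl⟩ h
  | neg Y => simp only [eval]; cases eval v Y <;> simp [tvNeg]
  | sneg Y => simp only [eval]; cases eval v Y <;> simp [tvSNeg]
  | inc n => simp only [eval]; cases v n <;> simp [tvInc]
  | conj Y Z => simp [eval, tvAnd]; split <;> simp
  | disj Y Z => simp [eval, tvOr]; split <;> simp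
  | imp Y Z => simp [eval, tvImp]; split <;> simp

lemma key (v : ℕ → TV) (X : Fm) (h1 : noAtomicNeg X) (h2 : noInc X) :
    tb (eval v X) = ceval (fun n => tb (v n)) X := by
  induction X with
  | atom n => rfl
  | inc n => exact absurd h2 (by simp [noInc])
  | neg Y ih =>
      obtain ⟨hna, h1'⟩ := h1
      have := nonatom_nostar v Y hna
      have := ih h1' h2
      cases hY : eval v Y <;> simp_all [eval, ceval, tvNeg, tb]
  | sneg Y ih =>
      obtain ⟨hna, h1'⟩ := h1
      have := nonatom_nostar v Y hna
      have := ih h1' h2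
      cases hY : eval v Y <;> simp_all [eval, ceval, tvSNeg, tb]
  | conj Y Z ihY ihZ =>
      have hY := ihY h1.1 h2.1; have hZ := ihZ h1.2 h2.2
      simp only [eval, ceval, ← hY, ← hZ, tvAnd]
      cases eval v Y <;> cases eval v Z <;> simp [tb]
  | disj Y Z ihY ihZ =>
      have hY := ihY h1.1 h2.1; have hZ := ihZ h1.2 h2.2
      simp only [eval, ceval, ← hY, ← hZ, tvOr]
      cases eval v Y <;> cases eval v Z <;> simp [tb]
  | imp Y Z ihY ihZ =>
      have hY := ihY h1.1 h2.1; have hZ := ihZ h1.2 h2.2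
      simp only [eval, ceval, ← hY, ← hZ, tvImp]
      cases eval v Y <;> cases eval v Z <;> simp [tb]

theorem stmt12 (X : Fm) (h1 : noAtomicNeg X) (h2 : noInc X) :
    valid X ↔ ∀ w : ℕ → Bool, ceval w X = true := by
  constructor
  · intro hv w
    have h := key (fun n => ofBool (w n)) X h1 h2
    have hw : (fun n => tb (ofBool (w n))) = w := by
      funext n; cases w n <;> rfl
    rw [hw] at h
    have := hv (fun n => ofBool (w n))
    rw [← h]
    cases hx : eval (fun n => ofBool (w n)) X <;> simp_all [tb]
  · intro hc v
    have h := key v X h1 h2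
    rw [hc] at h
    cases hx : eval v X <;> simp_all [tb]
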